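/- Let γ > 0, set α = 2/γ², and let a ∈ ℂ. For every function f : ℂ → ℂ and every z ∈ ℂ one has exp(−z²/γ²) · 𝒲_a^α[w ↦ exp(w²/γ²)·f(w)](z) = exp((a² − |a|²)/γ² + (2/γ²)·z·(conj(a) − a)) · f(z − a), where 𝒲_a^α is the Fock-space Weyl operator 𝒲_a^α g(z) := g(z − a)·exp(α(z·conj(a) − |a|²/2)); that is, conjugating the Fock Weyl operator by the multiplication operators exp(±z²/γ²) yields the RBF–Weyl operator W_γ^a in explicit form. -/

import Mathlib

open MeasureTheory Complex

/-- The Fock-space Weyl operator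
`𝒲_a^α g(z) = g(z − a)·exp(α(z·conj a − |a|²/2))`. -/
noncomputable def fockWeyl (α : ℝ) (a : ℂ) (g : ℂ → ℂ) (z : ℂ) : ℂ :=
  g (z - a) *
    Complex.exp ((α : ℂ) * (z * (starRingEnd ℂ) a - ((‖a‖ : ℝ) : ℂ) ^ 2 / 2))

theorem exp_neg_sq_div_mul_fockWeyl_exp_sq_div_mul (α : ℝ) (c a : ℂ) (f : ℂ → ℂ) (z : ℂ) :
    exp (-z ^ 2 / c) * fockWeyl α a (fun w => exp (w ^ 2 / c) * f w) z =
      exp ((a ^ 2 - 2 * z * a) / c +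
          (α : ℂ) * (z * (starRingEnd ℂ) a - ((‖a‖ : ℝ) : ℂ) ^ 2 / 2)) * f (z - a) := by
  have hsq : -z ^ 2 / c + (z - a) ^ 2 / c = (a ^ 2 - 2 * z * a) / c := by ring
  rw [fockWeyl, ← hsq, exp_add, exp_add]
  ring

theorem rbfWeyl_conjugation_general (γ : ℝ) (α : ℝ) (hα : α = 2 / γ ^ 2) (a : ℂ) :
    ∀ (f : ℂ → ℂ) (z : ℂ),
      Complex.exp (-z ^ 2 / (γ : ℂ) ^ 2) *
          fockWeyl α a (fun w => Complex.exp (w ^ 2 / (γ : ℂ) ^ 2) * f w) z =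
        Complex.exp ((a ^ 2 - ((‖a‖ : ℝ) : ℂ) ^ 2) / (γ : ℂ) ^ 2 +
            (2 / (γ : ℂ) ^ 2) * z * ((starRingEnd ℂ) a - a)) * f (z - a) := by
  intro f z
  rw [exp_neg_sq_div_mul_fockWeyl_exp_sq_div_mul, hα]
  congr 2
  push_cast
  ring

theorem rbfWeyl_conjugation (γ : ℝ) (hγ : 0 < γ) (α : ℝ) (hα : α = 2 / γ ^ 2) (a : ℂ) :
    ∀ (f : ℂ → ℂ) (z : ℂ),
      Complex.exp (-z ^ 2 / (γ : ℂ) ^ 2) *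
          fockWeyl α a (fun w => Complex.exp (w ^ 2 / (γ : ℂ) ^ 2) * f w) z =
        Complex.exp ((a ^ 2 - ((‖a‖ : ℝ) : ℂ) ^ 2) / (γ : ℂ) ^ 2 +
            (2 / (γ : ℂ) ^ 2) * z * ((starRingEnd ℂ) a - a)) * f (z - a) :=
  rbfWeyl_conjugation_general γ α hα a
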